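/- arXiv:2303.04083 — 3 statements merged into one kernel-verified Lean document; each statement's English description precedes it below -/
import Mathlib

section
/- Let G be an abelian group and ℓ a prime, r ≥ 2. Suppose G contains an infinite subset whose elements have pairwise distinct, linearly independent images in the 𝔽_ℓ-vector space G/ℓG, and suppose the subgroup G[ℓʳ] of ℓʳ-torsion elements is finite. Then G/ℓʳG contains infinitely many elements of order exactly ℓʳ. -/
/-!
Call `i` bad if the class of `a i` in `G/ℓʳG` has order smaller than `ℓʳ`, i.e. (as `ℓ` is
prime) `ℓ^(r-1) a i = ℓʳ w` for some `w`. Then `b := a i - ℓ w` is `ℓʳ`-torsion and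
`a i ≡ b (mod ℓG)`. Since the `a i` are pairwise distinct modulo `ℓ` and `G[ℓʳ]` is finite, only
finitely many `i` are bad; the remaining infinitely many `a i` stay distinct modulo `ℓʳ`.
-/

abbrev smulRange (G : Type*) [AddCommGroup G] (n : ℤ) : Submodule ℤ G :=
  LinearMap.range (n • LinearMap.id)

section

variable {G : Type*} [AddCommGroup G]

theorem mem_smulRange {n : ℤ} {g : G} : g ∈ smulRange G n ↔ ∃ w, n • w = g := by
  simp [LinearMap.mem_range]

theorem smulRange_le_of_dvd {k n : ℤ} (h : k ∣ n) : smulRange G n ≤ smulRange G k := by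
  obtain ⟨m, rfl⟩ := h
  intro g hg
  obtain ⟨w, rfl⟩ := mem_smulRange.mp hg
  exact mem_smulRange.mpr ⟨m • w, by rw [smul_smul]⟩

theorem nsmul_mk_smulRange (n : ℕ) (g : G) :
    n • (Submodule.Quotient.mk g : G ⧸ smulRange G n) = 0 := by
  rw [← Submodule.Quotient.mk_smul, Submodule.Quotient.mk_eq_zero]
  exact mem_smulRange.mpr ⟨g, natCast_zsmul g n⟩

theorem eq_of_sub_mem_smulRange_of_indep {ℓ : ℤ} (hℓ : ¬IsUnit ℓ) {a : ℕ → G}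
    (hindep : ∀ (T : Finset ℕ) (c : ℕ → ℤ),
      (∃ w : G, (∑ i ∈ T, c i • a i) = ℓ • w) → ∀ i ∈ T, ℓ ∣ c i)
    {i j : ℕ} (h : a i - a j ∈ smulRange G ℓ) : i = j := by
  by_contra hij
  obtain ⟨w, hw⟩ := mem_smulRange.mp h
  have hdvd := hindep {i, j} (fun k => if k = i then 1 else -1) ⟨w, ?_⟩ i
    (Finset.mem_insert_self i {j})
  · exact hℓ (isUnit_of_dvd_one (by simpa using hdvd))
  rw [Finset.sum_pair hij, hw]
  simp [Ne.symm hij, sub_eq_add_neg]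

theorem exists_smul_eq_zero_sub_mem_of_smul_mem {m k : ℤ} {g : G}
    (h : m • g ∈ smulRange G (m * k)) : ∃ b, m • b = 0 ∧ g - b ∈ smulRange G k := by
  obtain ⟨w, hw⟩ := mem_smulRange.mp h
  refine ⟨g - k • w, ?_, mem_smulRange.mpr ⟨w, by abel⟩⟩
  rw [smul_sub, smul_smul, hw, sub_self]

theorem exists_torsion_sub_mem_of_addOrderOf_mk_ne {ℓ s : ℕ} [Fact ℓ.Prime] {g : G}
    (h : addOrderOf (Submodule.Quotient.mk g : G ⧸ smulRange G ((ℓ ^ (s + 1) : ℕ) : ℤ)) ≠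
      ℓ ^ (s + 1)) :
    ∃ b : G, ℓ ^ (s + 1) • b = 0 ∧ g - b ∈ smulRange G ℓ := by
  have hs : ℓ ^ s • (Submodule.Quotient.mk g : G ⧸ smulRange G ((ℓ ^ (s + 1) : ℕ) : ℤ)) = 0 :=
    not_not.mp fun hs => h (addOrderOf_eq_prime_pow hs (nsmul_mk_smulRange _ g))
  rw [← Submodule.Quotient.mk_smul, Submodule.Quotient.mk_eq_zero, ← natCast_zsmul,
    pow_succ, Nat.cast_mul] at hs
  obtain ⟨b, hb, hgb⟩ := exists_smul_eq_zero_sub_mem_of_smul_mem hs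
  refine ⟨b, ?_, hgb⟩
  rw [pow_succ, mul_nsmul, ← natCast_zsmul b, hb, nsmul_zero]

end

theorem finite_setOf_exists_sub_mem {R M ι : Type*} [Ring R] [AddCommGroup M] [Module R M]
    {p : Submodule R M} {a : ι → M} (ha : ∀ i j, a i - a j ∈ p → i = j) {T : Set M}
    (hT : T.Finite) : {i | ∃ b ∈ T, a i - b ∈ p}.Finite := by
  have hinj : Function.Injective fun i => (Submodule.Quotient.mk (a i) : M ⧸ p) :=
    fun i j hij => ha i j ((Submodule.Quotient.eq p).mp hij)
  convert (hT.image Submodule.Quotient.mk).preimage hinj.injOn using 1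
  ext i
  simp [Submodule.Quotient.eq, sub_mem_comm_iff]

theorem infinitely_many_order_ell_r_general (G : Type*) [AddCommGroup G] (ℓ r : ℕ)
    (hℓ : ℓ.Prime) (hr : 2 ≤ r) (a : ℕ → G)
    (hindep : ∀ (T : Finset ℕ) (c : ℕ → ℤ),
      (∃ w : G, (∑ i ∈ T, c i • a i) = (ℓ : ℤ) • w) → ∀ i ∈ T, (ℓ : ℤ) ∣ c i)
    (hfin : {g : G | ℓ ^ r • g = 0}.Finite) :
    {x : G ⧸ (LinearMap.range (((ℓ ^ r : ℕ) : ℤ) • (LinearMap.id : G →ₗ[ℤ] G))) |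
      addOrderOf x = ℓ ^ r}.Infinite := by
  have := Fact.mk hℓ
  obtain ⟨s, rfl⟩ : ∃ s, r = s + 1 := ⟨r - 1, by omega⟩
  have hdistinct : ∀ i j, a i - a j ∈ smulRange G ℓ → i = j :=
    fun i j => eq_of_sub_mem_smulRange_of_indep (Nat.prime_iff_prime_int.mp hℓ).not_isUnit hindep
  let π : ℕ → G ⧸ smulRange G ((ℓ ^ (s + 1) : ℕ) : ℤ) := fun i => Submodule.Quotient.mk (a i)
  have hπ : Function.Injective π := fun i j hij =>
    hdistinct i j <|
      smulRange_le_of_dvd (Int.natCast_dvd_natCast.mpr (dvd_pow_self ℓ s.succ_ne_zero))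
        ((Submodule.Quotient.eq _).mp hij)
  have hbad : {i | addOrderOf (π i) ≠ ℓ ^ (s + 1)}.Finite :=
    (finite_setOf_exists_sub_mem hdistinct hfin).subset fun i hi =>
      exists_torsion_sub_mem_of_addOrderOf_mk_ne hi
  refine ((hbad.infinite_compl).image hπ.injOn).mono ?_
  rintro _ ⟨i, hi, rfl⟩
  simpa using hi

/-- If an abelian group `G` contains a sequence of elements that are linearly
independent modulo `ℓ`, and the `ℓʳ`-torsion subgroup of `G` is finite, then
`G/ℓʳG` contains infinitely many elements of order exactly `ℓʳ`. -/
theorem infinitely_many_order_ell_r (G : Type*) [AddCommGroup G] (ℓ r : ℕ)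
    (hℓ : ℓ.Prime) (hr : 2 ≤ r) (a : ℕ → G) (ha : Function.Injective a)
    (hindep : ∀ (T : Finset ℕ) (c : ℕ → ℤ),
      (∃ w : G, (∑ i ∈ T, c i • a i) = (ℓ : ℤ) • w) → ∀ i ∈ T, (ℓ : ℤ) ∣ c i)
    (hfin : {g : G | ℓ ^ r • g = 0}.Finite) :
    {x : G ⧸ (LinearMap.range (((ℓ ^ r : ℕ) : ℤ) • (LinearMap.id : G →ₗ[ℤ] G))) |
      addOrderOf x = ℓ ^ r}.Infinite :=
  infinitely_many_order_ell_r_general G ℓ r hℓ hr a hindep hfin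
end

section
/- Let M be an abelian group and N ≥ 1. Define Φ : M^N → M^N by Φ(α)_t = α_{t−1} − 2α_t + α_{t+1}, with the conventions α₀ = α_{N+1} = 0. Then the map M[N+1] → ker(Φ) sending α to (α, 2α, 3α, …, Nα) is an isomorphism of abelian groups, where M[N+1] = {α ∈ M : (N+1)·α = 0}. -/
/-!
Extend `β` by zero to a sequence `f` on `0, …, N + 1`. Then `Φ β = 0` says that all second
differences of `f` vanish, i.e. `f` is arithmetic; since `f 0 = 0` this means `f j = j • f 1`.
The remaining boundary condition `f (N + 1) = 0` is exactly `(N + 1) • f 1 = 0`, and `α` is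
forced to be `f 1 = 1 • α`.
-/

section DiscreteLaplacian

variable {M : Type*} [AddCommGroup M]

def discreteLaplacian (f : ℕ → M) (k : ℕ) : M := f k - 2 • f (k + 1) + f (k + 2)

theorem discreteLaplacian_nsmul (a : M) (k : ℕ) :
    discreteLaplacian (fun j ↦ j • a) k = 0 := by
  simp only [discreteLaplacian, add_nsmul, two_nsmul, one_nsmul]
  abel

theorem eq_nsmul_of_discreteLaplacian_eq_zero {f : ℕ → M} (h0 : f 0 = 0) {n : ℕ}
    (hf : ∀ k < n, discreteLaplacian f k = 0) : ∀ j ≤ n + 1, f j = j • f 1 := by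
  intro j
  induction j using Nat.twoStepInduction with
  | zero => simp [h0]
  | one => simp
  | more k ih₀ ih₁ =>
    intro hk
    have hlap := hf k (by omega)
    rw [discreteLaplacian, ih₀ (by omega), ih₁ (by omega), ← discreteLaplacian_nsmul (f 1) k,
      discreteLaplacian] at hlap
    exact add_left_cancel hlap

theorem discreteLaplacian_eq_zero_iff {f : ℕ → M} (h0 : f 0 = 0) {n : ℕ} :
    (∀ k < n, discreteLaplacian f k = 0) ↔ ∀ j ≤ n + 1, f j = j • f 1 := by
  refine ⟨eq_nsmul_of_discreteLaplacian_eq_zero h0, fun hf k hk ↦ ?_⟩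
  rw [discreteLaplacian, hf k (by omega), hf (k + 1) (by omega), hf (k + 2) (by omega)]
  exact discreteLaplacian_nsmul (f 1) k

end DiscreteLaplacian

section ExtendByZero

variable {M : Type*} [AddCommGroup M] {N : ℕ}

/-- Entry `t` of `α` sits at position `t + 1`, so that positions `0` and `N + 1` carry the
boundary values `α₀ = α_{N+1} = 0` of the informal statement. -/
def extendByZero (α : Fin N → M) (j : ℕ) : M :=
  if h : 1 ≤ j ∧ j ≤ N then α ⟨j - 1, Nat.sub_one_lt_of_le h.1 h.2⟩ else 0

theorem extendByZero_zero (α : Fin N → M) : extendByZero α 0 = 0 := by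
  simp [extendByZero]

theorem extendByZero_of_lt (α : Fin N → M) {j : ℕ} (hj : N < j) : extendByZero α j = 0 :=
  dif_neg (by omega)

theorem extendByZero_succ (α : Fin N → M) (t : Fin N) : extendByZero α (t + 1) = α t := by
  simp [extendByZero]

theorem forall_extendByZero_eq_nsmul_iff (α : Fin N → M) (a : M) :
    (∀ j ≤ N + 1, extendByZero α j = j • a) ↔
      (N + 1) • a = 0 ∧ ∀ t : Fin N, α t = (t.1 + 1) • a := by
  refine ⟨fun h ↦ ⟨?_, fun t ↦ ?_⟩, fun ⟨hN, hα⟩ j hj ↦ ?_⟩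
  · rw [← h (N + 1) le_rfl, extendByZero_of_lt α (Nat.lt_succ_self N)]
  · rw [← extendByZero_succ α t, h _ (by omega)]
  · rcases j with _ | j
    · simp [extendByZero_zero]
    · obtain hj | rfl := (Nat.succ_le_succ_iff.mp hj).lt_or_eq
      · exact (extendByZero_succ α ⟨j, hj⟩).trans (hα ⟨j, hj⟩)
      · rw [extendByZero_of_lt α (Nat.lt_succ_self j), hN]

end ExtendByZero

/-- The kernel of the tridiagonal map `Φ(α)_t = α_{t−1} − 2α_t + α_{t+1}` on `M^N`
(with the convention `α₀ = α_{N+1} = 0`) is isomorphic to `M[N+1]` via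
`α ↦ (α, 2α, …, Nα)`. -/
theorem ker_discrete_laplacian (M : Type*) [AddCommGroup M] (N : ℕ)
    (e : (Fin N → M) → ℕ → M)
    (he : ∀ α j, e α j = if h : 1 ≤ j ∧ j ≤ N then α ⟨j - 1, by omega⟩ else 0)
    (Φ : (Fin N → M) → Fin N → M)
    (hΦ : ∀ α t, Φ α t = e α t.1 - 2 • e α (t.1 + 1) + e α (t.1 + 2)) :
    ∀ β : Fin N → M,
      Φ β = 0 ↔ ∃! α : M, (N + 1) • α = 0 ∧ ∀ t : Fin N, β t = (t.1 + 1) • α := by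
  intro β
  have hΦβ : Φ β = 0 ↔ ∀ k < N, discreteLaplacian (extendByZero β) k = 0 := by
    have he' : e β = extendByZero β := funext (he β)
    simp only [funext_iff, hΦ, he', Pi.zero_apply, discreteLaplacian]
    exact ⟨fun h k hk ↦ h ⟨k, hk⟩, fun h t ↦ h t t.2⟩
  have hβ1 : ∀ a, (∀ j ≤ N + 1, extendByZero β j = j • a) → extendByZero β 1 = a :=
    fun a ha ↦ by simpa using ha 1 (by omega)
  rw [hΦβ, discreteLaplacian_eq_zero_iff (extendByZero_zero β)]
  simp_rw [← forall_extendByZero_eq_nsmul_iff]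
  exact ⟨fun h ↦ ⟨_, h, fun a ha ↦ (hβ1 a ha).symm⟩, fun ⟨a, ha, _⟩ ↦ hβ1 a ha ▸ ha⟩
end

section
/- Let ℓ be a prime, r ≥ 1, and N = d·ℓʳ − 1 with gcd(d,ℓ)=1. Let M be a free ℤ/ℓʳ-module and Φ̄ : M^N → M^N be given by Φ̄(α)_t = α_{t−1} − 2α_t + α_{t+1} (α₀ = α_{N+1} = 0). Then ker(Φ̄) ≅ M, via α ↦ (α, 2α, …, Nα). -/
/-!
A sequence `b : ℕ → M` with `b 0 = 0` whose second differences vanish up to `n` is linear,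
`b j = j • b 1` for `j ≤ n + 1`. Extending `β : Fin N → M` by zero at `0` and `N + 1`, the
kernel condition is exactly this, except that linearity must also hold at `N + 1`, i.e.
`(N + 1) • β 0 = 0`; this is automatic because `N + 1 = d * ℓ ^ r` kills every `ℤ/ℓʳ`-module.
-/

section SecondDifference

variable {M : Type*} [AddCommGroup M]

theorem nsmul_sub_two_nsmul_add_nsmul (a : M) (t : ℕ) :
    t • a - 2 • ((t + 1) • a) + (t + 2) • a = 0 := by
  rw [sub_add_eq_add_sub, ← add_nsmul, ← mul_nsmul', sub_eq_zero]
  congr 1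
  ring

theorem second_diff_eq_zero_iff_eq_nsmul {b : ℕ → M} (hb0 : b 0 = 0) (n : ℕ) :
    (∀ t < n, b t - 2 • b (t + 1) + b (t + 2) = 0) ↔ ∀ j ≤ n + 1, b j = j • b 1 := by
  constructor
  · intro h
    have linear : ∀ j ≤ n, b j = j • b 1 ∧ b (j + 1) = (j + 1) • b 1 := by
      intro j hj
      induction j with
      | zero => simp [hb0]
      | succ j ih =>
        obtain ⟨hj, hj1⟩ := ih (by omega)
        have hstep := h j (by omega)
        rw [hj, hj1, ← nsmul_sub_two_nsmul_add_nsmul (b 1) j] at hstep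
        exact ⟨hj1, add_left_cancel hstep⟩
    rintro (_ | j) hj
    · simp [hb0]
    · exact (linear j (by omega)).2
  · intro h t ht
    rw [h t (by omega), h (t + 1) (by omega), h (t + 2) (by omega)]
    exact nsmul_sub_two_nsmul_add_nsmul (b 1) t

theorem forall_le_eq_nsmul_iff_existsUnique {n : ℕ} (hn : 0 < n) {b : ℕ → M} (hb0 : b 0 = 0)
    (hbn : b (n + 1) = 0) (htors : ∀ x : M, (n + 1) • x = 0) :
    (∀ j ≤ n + 1, b j = j • b 1) ↔ ∃! α : M, ∀ t : Fin n, b (t + 1) = (t.1 + 1) • α := by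
  constructor
  · intro h
    refine ⟨b 1, fun t ↦ h (t + 1) (by omega), fun α hα ↦ ?_⟩
    simpa using (hα ⟨0, hn⟩).symm
  · rintro ⟨α, hα, -⟩
    have hα1 : b 1 = α := by simpa using hα ⟨0, hn⟩
    rintro (_ | j) hj
    · simp [hb0]
    · obtain hj | rfl := Nat.lt_or_eq_of_le (Nat.le_of_succ_le_succ hj)
      · simpa [hα1] using hα ⟨j, hj⟩
      · rw [hbn, htors]

end SecondDifference

/-- For `N = d·ℓʳ − 1` with `gcd(d, ℓ) = 1` and `M` a free `ℤ/ℓʳ`-module, the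
kernel of the tridiagonal map `Φ̄` on `M^N` is isomorphic to `M` via
`α ↦ (α, 2α, …, Nα)`. -/
theorem ker_discrete_laplacian_zmod (ℓ : ℕ) (hℓ : ℓ.Prime) (r d : ℕ) (hr : 1 ≤ r)
    (hd : 1 ≤ d) (N : ℕ) (hN : N = d * ℓ ^ r - 1)
    (M : Type*) [AddCommGroup M] [Module (ZMod (ℓ ^ r)) M]
    (e : (Fin N → M) → ℕ → M)
    (he : ∀ α j, e α j = if h : 1 ≤ j ∧ j ≤ N then α ⟨j - 1, by omega⟩ else 0)
    (Φ : (Fin N → M) → Fin N → M)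
    (hΦ : ∀ α t, Φ α t = e α t.1 - 2 • e α (t.1 + 1) + e α (t.1 + 2)) :
    ∀ β : Fin N → M, Φ β = 0 ↔ ∃! α : M, ∀ t : Fin N, β t = (t.1 + 1) • α := by
  have htwo : 2 ≤ d * ℓ ^ r :=
    (hℓ.two_le.trans (Nat.le_self_pow (by omega) ℓ)).trans (Nat.le_mul_of_pos_left _ hd)
  have hN1 : N + 1 = d * ℓ ^ r := by omega
  have htors (x : M) : (N + 1) • x = 0 := by
    rw [hN1, mul_nsmul, ZModModule.char_nsmul_eq_zero]
  intro β
  have hβ (t : Fin N) : β t = e β (t + 1) := by simp [he]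
  rw [funext_iff, Fin.forall_iff]
  simp only [hΦ, Pi.zero_apply, hβ]
  rw [second_diff_eq_zero_iff_eq_nsmul (by simp [he]),
    forall_le_eq_nsmul_iff_existsUnique (by omega) (by simp [he]) (by simp [he]) htors]
end
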